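/- Let G be a group, n ≥ 3, E the set of idempotents of End F_n(G), and IG(E) the free idempotent generated monoid over E. Let a : {1,…,n} → G with a(1) = 1 and let j, k ∈ {1,…,n}. If a(j) = a(k) (equivalently, e_{1j} e_{a,1} = e_{1k} e_{a,1} in End F_n(G)), then ē_{11} ē_{a,j} ē_{11} = ē_{11} ē_{a,k} ē_{11} in IG(E). -/

import Mathlib

/-- An endomorphism of the rank-`n` free left `G`-act `F_n(G) = G × Fin n`
(the formal symbols `g x_i` are the pairs `(g, i)`), where the action is
`h • (g, i) = (h * g, i)` and equivariance says `(h • x) a = h • (x a)`. -/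
structure ActEnd (G : Type*) [Group G] (n : ℕ) : Type _ where
  toFun : G × Fin n → G × Fin n
  equivariant : ∀ (h : G) (x : G × Fin n),
    toFun (h * x.1, x.2) = (h * (toFun x).1, (toFun x).2)

namespace ActEnd

variable {G : Type*} [Group G] {n : ℕ}

/-- Composition is written left-to-right: `x (a * b) = (x a) b`. -/
instance : Monoid (ActEnd G n) where
  mul a b := ⟨fun x => b.toFun (a.toFun x), by
    intro h x
    try dsimp only
    rw [a.equivariant h x, b.equivariant]⟩
  one := ⟨id, fun _ _ => rfl⟩
  mul_assoc _ _ _ := rfl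
  one_mul _ := rfl
  mul_one _ := rfl

@[simp] theorem mul_toFun (a b : ActEnd G n) (x : G × Fin n) :
    (a * b).toFun x = b.toFun (a.toFun x) := rfl

theorem ext' {a b : ActEnd G n} (h : a.toFun = b.toFun) : a = b := by
  cases a; cases b; cases h; rfl

/-- The rank of an endomorphism of `F_n(G)`: the number of indices `j` such
that `G x_j` meets the image. -/
noncomputable def rank (a : ActEnd G n) : ℕ :=
  Nat.card {j : Fin n // ∃ x, (a.toFun x).2 = j}

end ActEnd

namespace ActEnd

variable {G : Type*} [Group G] {n : ℕ}

/-- The rank-1 idempotent `e_{a,j}` given by `(g x_t) e_{a,j} = (g * a t * (a j)⁻¹) x_j`.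
Taking `a` constantly `1` gives `e_{1j}`, and also `j = 0` gives `e_{11}`
(indices `1, …, n` are realised as `Fin n`, with `1 ↦ 0`). -/
def eaj (a : Fin n → G) (j : Fin n) : ActEnd G n :=
  ⟨fun x => (x.1 * a x.2 * (a j)⁻¹, j), by intro h x; simp [mul_assoc]⟩

theorem eaj_idem (a : Fin n → G) (j : Fin n) : eaj a j * eaj a j = eaj a j := by
  apply ext'
  funext x
  simp [eaj, mul_assoc]

/-- The map `a_g : g' x_t ↦ (g' * g) x_1`. -/
def aMap (g : G) (h0 : 0 < n) : ActEnd G n :=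
  ⟨fun x => (x.1 * g, ⟨0, h0⟩), by intro h x; simp [mul_assoc]⟩

end ActEnd

/-- The principal left ideal `M a` of `a`. -/
def lIdeal {M : Type*} [Monoid M] (a : M) : Set M := Set.range fun m => m * a

/-- The principal right ideal `a M` of `a`. -/
def rIdeal {M : Type*} [Monoid M] (a : M) : Set M := Set.range fun m => a * m

/-- The `H`-class of `e`: all elements that are both `L`- and `R`-related to `e`. -/
def hClass {M : Type*} [Monoid M] (e : M) : Set M :=
  {a | lIdeal a = lIdeal e ∧ rIdeal a = rIdeal e}

/-- The defining relation of the free idempotent generated monoid `IG(E)`: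
`ē f̄ = (e f)‾` whenever `{e, f} ∩ {e f, f e} ≠ ∅`. -/
def igRel (M : Type*) [Monoid M] :
    FreeMonoid {e : M // e * e = e} → FreeMonoid {e : M // e * e = e} → Prop :=
  fun x y => ∃ e f g : {e : M // e * e = e},
    (e.1 * f.1 = e.1 ∨ e.1 * f.1 = f.1 ∨ f.1 * e.1 = e.1 ∨ f.1 * e.1 = f.1) ∧
    e.1 * f.1 = g.1 ∧
    x = FreeMonoid.of e * FreeMonoid.of f ∧ y = FreeMonoid.of g

/-- The free idempotent generated monoid over the biordered set of idempotents
of `M`: the presented monoid with generators `ē` for each idempotent `e` and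
relations `ē f̄ = (e f)‾` whenever `{e, f} ∩ {e f, f e} ≠ ∅`. -/
abbrev IG (M : Type*) [Monoid M] : Type _ := (conGen (igRel M)).Quotient

/-- The generator `ē` of `IG(E)` corresponding to the idempotent `e`. -/
def ebar {M : Type*} [Monoid M] (e : {e : M // e * e = e}) : IG M :=
  (conGen (igRel M)).mk' (FreeMonoid.of e)

/-- `ē_{a,j}` as an element of `IG(E)` for `E` the idempotents of `End F_n(G)`. -/
def igE {G : Type*} [Group G] {n : ℕ} (a : Fin n → G) (j : Fin n) : IG (ActEnd G n) :=
  ebar ⟨ActEnd.eaj a j, ActEnd.eaj_idem a j⟩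

/-- `ē_{11}` as an element of `IG(E)`. -/
def ig11 {G : Type*} [Group G] {n : ℕ} (h0 : 0 < n) : IG (ActEnd G n) :=
  igE (fun _ => (1 : G)) ⟨0, h0⟩

/-
Let `s` be the idempotent `g x_t ↦ g x_{ρ t}` that moves `x_k` to `x_j` and fixes every other
`x_t`. Since `a j = a k`, we have `a ∘ ρ = a`, hence `s e_{a,k} = e_{a,k}` and
`e_{a,k} s = e_{a,j}`; also `s e_{11} = e_{11}`. Both pairs are basic, so in `IG(E)`
`ē_{a,j} ē_{11} = ē_{a,k} s̄ ē_{11} = ē_{a,k} ē_{11}`.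
-/

theorem ebar_mul_ebar_of_basic {M : Type*} [Monoid M] {e f g : {e : M // e * e = e}}
    (hb : e.1 * f.1 = e.1 ∨ e.1 * f.1 = f.1 ∨ f.1 * e.1 = e.1 ∨ f.1 * e.1 = f.1)
    (hg : e.1 * f.1 = g.1) : ebar e * ebar f = ebar g :=
  (Con.eq _).mpr (ConGen.Rel.of _ _ ⟨e, f, g, hb, hg, rfl, rfl⟩)

namespace ActEnd

variable {G : Type*} [Group G] {n : ℕ}

def reindex (ρ : Fin n → Fin n) : ActEnd G n :=
  ⟨fun x => (x.1, ρ x.2), fun _ _ => rfl⟩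

theorem reindex_mul_self {ρ : Fin n → Fin n} (hρ : ρ ∘ ρ = ρ) :
    reindex (G := G) ρ * reindex ρ = reindex ρ := by
  change reindex (ρ ∘ ρ) = _
  rw [hρ]

theorem reindex_mul_eaj {a : Fin n → G} {ρ : Fin n → Fin n} (ha : ∀ t, a (ρ t) = a t) (k : Fin n) :
    reindex ρ * eaj a k = eaj a k := by
  apply ext'
  funext x
  simp only [mul_toFun, reindex, eaj, ha]

theorem eaj_mul_reindex {a : Fin n → G} {ρ : Fin n → Fin n} {j k : Fin n}
    (hρ : ρ k = j) (hjk : a j = a k) : eaj a k * reindex ρ = eaj a j := by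
  apply ext'
  funext x
  simp [reindex, eaj, hρ, hjk]

end ActEnd

open ActEnd in
theorem igE_mul_igE_one_eq_of_eq {G : Type*} [Group G] {n : ℕ} {a : Fin n → G} {j k : Fin n}
    (hjk : a j = a k) (z : Fin n) :
    igE a j * igE (fun _ => (1 : G)) z = igE a k * igE (fun _ => 1) z := by
  set ρ : Fin n → Fin n := Function.update id k j
  have hρρ : ρ ∘ ρ = ρ := by
    funext t
    by_cases ht : t = k <;> by_cases hj : j = k <;> simp [ρ, ht, hj]
  have haρ : ∀ t, a (ρ t) = a t := by
    intro t
    by_cases ht : t = k <;> simp [ρ, ht, hjk]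
  let s : {e : ActEnd G n // e * e = e} := ⟨reindex ρ, reindex_mul_self hρρ⟩
  have hks : igE a k * ebar s = igE a j :=
    ebar_mul_ebar_of_basic (Or.inr (Or.inr (Or.inl (reindex_mul_eaj haρ k))))
      (eaj_mul_reindex (Function.update_self k j id) hjk)
  have hs_one : reindex ρ * eaj (fun _ => (1 : G)) z = eaj (fun _ => 1) z :=
    reindex_mul_eaj (ρ := ρ) (fun _ => rfl) z
  have hs1 : ebar s * igE (fun _ => (1 : G)) z = igE (fun _ => 1) z :=
    ebar_mul_ebar_of_basic (Or.inr (Or.inl hs_one)) hs_one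
  rw [← hks, mul_assoc, hs1]

/-- If `a j = a k` (equivalently `e_{1j} e_{a,1} = e_{1k} e_{a,1}`), then
`ē_{11} ē_{a,j} ē_{11} = ē_{11} ē_{a,k} ē_{11}` in `IG(E)`. -/
theorem stmt15 {G : Type*} [Group G] {n : ℕ} (hn : 3 ≤ n)
    (a : Fin n → G) (j k : Fin n) (hjk : a j = a k) :
    ig11 (G := G) (n := n) (by omega) * igE a j * ig11 (G := G) (n := n) (by omega) =
      ig11 (G := G) (n := n) (by omega) * igE a k * ig11 (G := G) (n := n) (by omega) := by
  rw [mul_assoc, mul_assoc, ig11, igE_mul_igE_one_eq_of_eq hjk]
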